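/- Let r ≥ 2 be an integer, t = exp(iπ/(2r)), and [n] = sin(nπ/r)/sin(π/r) the quantized integer. Then there exists a nonzero constant C ∈ ℂ, independent of j, such that for every j ∈ {1, 2, …, r−1}: Σ_{k=1}^{r−1} [jk]·[k]·t^{−k²} = C·[j]·t^{j²}. (This Gauss-sum identity yields the coefficients of the skein F(T) representing the positive twist in the Reshetikhin–Turaev representation on the torus.) -/

import Mathlib

open Complex

/-- The quantized integer `[n] = sin(nπ/r)/sin(π/r)`. -/
noncomputable def qint (r n : ℕ) : ℝ := Real.sin (n * Real.pi / r) / Real.sin (Real.pi / r)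

/-- The root of unity `t = exp(iπ/(2r))`. -/
noncomputable def tC (r : ℕ) : ℂ := Complex.exp (Real.pi * Complex.I / (2 * r))

/-!
With `t` a primitive `4r`-th root of unity, `[n] = (t^{2n} - t^{-2n}) / (t^2 - t^{-2})`.
The summand is even and `2r`-periodic in `k` and vanishes at `k = 0` and `k = r`, so the sum is
half the sum over a full period. Expanding the two numerators gives four sums
`∑ t^{-k² + 2ak}` with `a = ±(j + 1), ±(j - 1)`; completing the square and shifting `k` turns each
into `t^{a²} G` with the quadratic Gauss sum `G = ∑_{k < 2r} t^{-k²}`, and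
`t^{(j+1)²} - t^{(j-1)²} = t (t^{2j} - t^{-2j}) t^{j²}`. So `C = G t / (t² - t⁻²)`, and `G ≠ 0`
because `G(t) G(t⁻¹) = 2r` by orthogonality of the characters `m ↦ t^{2nm}`.
-/

open Finset

theorem Function.Periodic.sum_range_comp_add {M : Type*} [AddCommGroup M] {f : ℤ → M} {N : ℕ}
    (hf : Function.Periodic f N) (a : ℤ) :
    ∑ k ∈ range N, f (k + a) = ∑ k ∈ range N, f k := by
  have step : ∀ a : ℤ, ∑ k ∈ range N, f (k + (a + 1)) = ∑ k ∈ range N, f (k + a) := fun a ↦ by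
    have hwrap : f (N + a) = f (0 + a) := by rw [zero_add, add_comm, hf]
    have := (sum_range_succ' (fun k : ℕ ↦ f (k + a)) N).symm.trans
      (sum_range_succ (fun k : ℕ ↦ f (k + a)) N)
    push_cast at this
    rw [hwrap] at this
    simpa only [add_assoc, add_comm 1 a] using add_right_cancel this
  induction a using Int.induction_on with
  | zero => simp
  | succ i ih => rw [step, ih]
  | pred i ih => rw [← ih, ← step, sub_add_cancel]

theorem Function.Periodic.sum_range_two_mul_of_even {M : Type*} [AddCommMonoid M] {f : ℤ → M}
    {n : ℕ} (hf : Function.Periodic f (2 * n : ℕ)) (heven : ∀ k, f (-k) = f k) (hn : 0 < n) :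
    ∑ k ∈ range (2 * n), f k = f 0 + f n + 2 • ∑ k ∈ Icc 1 (n - 1), f k := by
  obtain ⟨m, rfl⟩ : ∃ m, n = m + 1 := ⟨n - 1, by omega⟩
  have hreflect : ∑ k ∈ range m, f (m + 1 + (k + 1) : ℕ) = ∑ k ∈ range m, f (k + 1 : ℕ) := by
    rw [← sum_range_reflect]
    refine sum_congr rfl fun k hk ↦ ?_
    have hk : k < m := mem_range.1 hk
    rw [← heven, ← hf]
    congr 1
    push_cast [Nat.sub_sub, Nat.cast_sub (by omega : 1 + k ≤ m)]
    ring
  rw [two_mul, sum_range_add, sum_range_succ', sum_range_succ', hreflect,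
    ← Ico_add_one_right_eq_Icc, sum_Ico_eq_sum_range]
  simp only [add_tsub_cancel_right, add_comm 1, two_nsmul, Nat.cast_zero, add_zero]
  abel

section QuadraticGaussSum

variable {K : Type*} [Field K] {t : K} {r : ℕ}

def qNumer (t : K) (n : ℤ) : K := t ^ (2 * n) - t ^ (-(2 * n))

def quadGaussSum (t : K) (N : ℕ) : K := ∑ k ∈ range N, t ^ (-(k : ℤ) ^ 2)

theorem qNumer_zero (t : K) : qNumer t 0 = 0 := by
  simp [qNumer]

theorem qNumer_neg (t : K) (n : ℤ) : qNumer t (-n) = -qNumer t n := by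
  simp only [qNumer, mul_neg, neg_neg, neg_sub]

theorem qNumer_eq_zero_of_pow_eq_one (ht : t ^ (4 * r) = 1) : qNumer t r = 0 := by
  rw [qNumer, sub_eq_zero, zpow_neg, show 2 * (r : ℤ) = (2 * r : ℕ) by push_cast; ring,
    zpow_natCast]
  exact eq_inv_of_mul_eq_one_left (by rw [← pow_add, ← two_mul, ← mul_assoc]; exact ht)

theorem periodic_qNumer (ht : t ^ (4 * r) = 1) (hr : r ≠ 0) :
    Function.Periodic (qNumer t) (2 * r : ℕ) := fun n ↦ by
  have ht0 : t ≠ 0 := (IsUnit.of_pow_eq_one ht (by omega)).ne_zero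
  have ht4 : t ^ (4 * r : ℤ) = 1 := by exact_mod_cast ht
  rw [qNumer, qNumer, show 2 * (n + (2 * r : ℕ)) = 2 * n + 4 * r by push_cast; ring,
    show -(2 * n + 4 * r) = -(2 * n) + -(4 * r) by ring, zpow_add₀ ht0, zpow_add₀ ht0,
    zpow_neg t (4 * r), ht4, inv_one, mul_one, mul_one]

theorem periodic_zpow_neg_sq (ht : t ^ (4 * r) = 1) (hr : r ≠ 0) :
    Function.Periodic (fun k : ℤ ↦ t ^ (-k ^ 2)) (2 * r : ℕ) := fun k ↦ by
  have ht0 : t ≠ 0 := (IsUnit.of_pow_eq_one ht (by omega)).ne_zero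
  have ht4 : t ^ (4 * r : ℤ) = 1 := by exact_mod_cast ht
  calc t ^ (-(k + (2 * r : ℕ)) ^ 2) = t ^ (-k ^ 2) * (t ^ (4 * r : ℤ)) ^ (-(k + r)) := by
        rw [← zpow_mul, ← zpow_add₀ ht0]; push_cast; ring_nf
    _ = t ^ (-k ^ 2) := by rw [ht4, one_zpow, mul_one]

theorem sum_range_zpow_neg_sq_add_two_mul (ht : t ^ (4 * r) = 1) (hr : r ≠ 0) (a : ℤ) :
    ∑ k ∈ range (2 * r), t ^ (-(k : ℤ) ^ 2 + 2 * a * k) =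
      t ^ (a ^ 2) * quadGaussSum t (2 * r) := by
  have ht0 : t ≠ 0 := (IsUnit.of_pow_eq_one ht (by omega)).ne_zero
  rw [quadGaussSum, ← (periodic_zpow_neg_sq ht hr).sum_range_comp_add (-a), mul_sum]
  refine sum_congr rfl fun k _ ↦ ?_
  rw [← zpow_add₀ ht0]
  ring_nf

theorem sum_range_qNumer_mul_qNumer_mul_zpow_neg_sq (ht : t ^ (4 * r) = 1) (hr : r ≠ 0) (j : ℤ) :
    ∑ k ∈ range (2 * r), qNumer t (j * k) * qNumer t k * t ^ (-(k : ℤ) ^ 2) =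
      2 * (quadGaussSum t (2 * r) * t * qNumer t j * t ^ (j ^ 2)) := by
  have ht0 : t ≠ 0 := (IsUnit.of_pow_eq_one ht (by omega)).ne_zero
  have hexpand : ∀ k : ℤ, qNumer t (j * k) * qNumer t k * t ^ (-k ^ 2) =
      t ^ (-k ^ 2 + 2 * (j + 1) * k) + t ^ (-k ^ 2 + 2 * (-(j + 1)) * k)
        - t ^ (-k ^ 2 + 2 * (j - 1) * k) - t ^ (-k ^ 2 + 2 * (-(j - 1)) * k) := fun k ↦ by
    simp only [qNumer, sub_mul, mul_sub, ← zpow_add₀ ht0]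
    ring_nf
  simp only [hexpand, sum_sub_distrib, sum_add_distrib, sum_range_zpow_neg_sq_add_two_mul ht hr]
  simp only [qNumer, mul_sub, sub_mul, mul_assoc, ← zpow_add₀ ht0, neg_sq, ← zpow_one_add₀ ht0]
  ring_nf

theorem sum_Icc_qNumer_mul_qNumer_mul_zpow_neg_sq [NeZero (2 : K)] (ht : t ^ (4 * r) = 1)
    (hr : r ≠ 0) (j : ℤ) :
    ∑ k ∈ Icc 1 (r - 1), qNumer t (j * k) * qNumer t k * t ^ (-(k : ℤ) ^ 2) =
      quadGaussSum t (2 * r) * t * qNumer t j * t ^ (j ^ 2) := by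
  set S : ℤ → K := fun k ↦ qNumer t (j * k) * qNumer t k * t ^ (-k ^ 2) with hS
  have hper : Function.Periodic S (2 * r : ℕ) := fun k ↦ by
    have hjk := (periodic_qNumer ht hr).int_mul j (j * k)
    rw [Int.cast_id] at hjk
    simp only [hS, mul_add, hjk, periodic_qNumer ht hr k, periodic_zpow_neg_sq ht hr k]
  have heven : ∀ k, S (-k) = S k := fun k ↦ by
    simp only [hS, mul_neg, qNumer_neg, neg_sq]
    ring
  have hfold := hper.sum_range_two_mul_of_even heven (Nat.pos_of_ne_zero hr)
  simp only [hS, mul_zero, qNumer_zero, zero_mul, qNumer_eq_zero_of_pow_eq_one ht, zero_add,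
    sum_range_qNumer_mul_qNumer_mul_zpow_neg_sq ht hr, two_nsmul, ← two_mul] at hfold
  exact (mul_left_cancel₀ two_ne_zero hfold).symm

theorem quadGaussSum_mul_quadGaussSum_inv (ht : IsPrimitiveRoot t (4 * r)) (hr : r ≠ 0) :
    quadGaussSum t (2 * r) * quadGaussSum t⁻¹ (2 * r) = 2 * r := by
  have ht0 : t ≠ 0 := ht.ne_zero (by omega)
  have ht' : t⁻¹ ^ (4 * r) = 1 := by rw [inv_pow, ht.pow_eq_one, inv_one]
  have hgeom : ∀ n ∈ range (2 * r), ∑ m ∈ range (2 * r), (t ^ (2 * n)) ^ m =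
      if n = 0 then (2 * r : K) else 0 := fun n hn ↦ by
    split_ifs with hn0
    · simp [hn0]
    have hn : n < 2 * r := mem_range.1 hn
    have hne : t ^ (2 * n) ≠ 1 := ht.pow_ne_one_of_pos_of_lt (by omega) (by omega)
    rw [geom_sum_eq hne, ← pow_mul, show 2 * n * (2 * r) = 4 * r * n by ring, pow_mul,
      ht.pow_eq_one, one_pow, sub_self, zero_div]
  have hrow : ∀ m : ℕ, t ^ (-(m : ℤ) ^ 2) * quadGaussSum t⁻¹ (2 * r) =
      ∑ n ∈ range (2 * r), t ^ ((n : ℤ) ^ 2) * (t ^ (2 * n)) ^ m := fun m ↦ by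
    rw [quadGaussSum, ← (periodic_zpow_neg_sq ht' hr).sum_range_comp_add m, mul_sum]
    refine sum_congr rfl fun n _ ↦ ?_
    rw [inv_zpow', neg_neg, ← pow_mul, ← zpow_natCast, ← zpow_add₀ ht0, ← zpow_add₀ ht0]
    push_cast
    ring_nf
  rw [quadGaussSum, sum_mul]
  simp only [hrow]
  rw [sum_comm]
  simp only [← mul_sum]
  rw [sum_congr rfl fun n hn ↦ by rw [hgeom n hn]]
  simp [Nat.pos_of_ne_zero hr]

theorem quadGaussSum_ne_zero (ht : IsPrimitiveRoot t (4 * r)) (hr : r ≠ 0) :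
    quadGaussSum t (2 * r) ≠ 0 := by
  have : NeZero (4 * r) := ⟨by omega⟩
  have h4 : ((4 * r : ℕ) : K) ≠ 0 := ht.neZero'.out
  have h2r : (2 * r : K) ≠ 0 := fun h ↦ h4 (by push_cast; linear_combination 2 * h)
  exact left_ne_zero_of_mul (quadGaussSum_mul_quadGaussSum_inv ht hr ▸ h2r)

end QuadraticGaussSum

theorem isPrimitiveRoot_tC {r : ℕ} (hr : r ≠ 0) : IsPrimitiveRoot (tC r) (4 * r) := by
  convert Complex.isPrimitiveRoot_exp (4 * r) (by omega) using 2
  rw [tC]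
  push_cast
  ring_nf

theorem qNumer_tC (r : ℕ) (n : ℤ) :
    qNumer (tC r) n = 2 * I * (Real.sin (n * Real.pi / r) : ℂ) := by
  rw [qNumer, tC, ← exp_int_mul, ← exp_int_mul, ofReal_sin, Complex.sin]
  push_cast
  ring_nf
  rw [I_sq]
  ring_nf

theorem sin_pi_div_ne_zero {r : ℕ} (hr : 2 ≤ r) : Real.sin (Real.pi / r) ≠ 0 :=
  (Real.sin_pos_of_pos_of_lt_pi (by positivity)
    (div_lt_self Real.pi_pos (by exact_mod_cast hr))).ne'

theorem qNumer_tC_one_ne_zero {r : ℕ} (hr : 2 ≤ r) : qNumer (tC r) 1 ≠ 0 := by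
  rw [qNumer_tC, Int.cast_one, one_mul]
  exact mul_ne_zero (mul_ne_zero two_ne_zero I_ne_zero) (ofReal_ne_zero.2 (sin_pi_div_ne_zero hr))

theorem qint_mul_qNumer_tC_one {r : ℕ} (hr : 2 ≤ r) (n : ℕ) :
    (qint r n : ℂ) * qNumer (tC r) 1 = qNumer (tC r) n := by
  have : (Real.sin (Real.pi / r) : ℂ) ≠ 0 := ofReal_ne_zero.2 (sin_pi_div_ne_zero hr)
  rw [qNumer_tC, qNumer_tC, qint, ofReal_div, Int.cast_one, one_mul, Int.cast_natCast]
  field_simp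

/-- Gauss sum identity: there is a nonzero constant `C`, independent of
`j`, such that for all `1 ≤ j ≤ r−1`,
`Σ_{k=1}^{r−1} [jk]·[k]·t^{−k²} = C·[j]·t^{j²}`. -/
theorem gauss_sum_twist_coefficients (r : ℕ) (hr : 2 ≤ r) :
    ∃ C : ℂ, C ≠ 0 ∧ ∀ j ∈ Finset.Icc 1 (r - 1),
      ∑ k ∈ Finset.Icc 1 (r - 1),
          (qint r (j * k) : ℂ) * (qint r k : ℂ) * (tC r) ^ (-((k : ℤ) ^ 2)) =
        C * (qint r j : ℂ) * (tC r) ^ ((j : ℤ) ^ 2) := by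
  have hr0 : r ≠ 0 := by omega
  have ht := isPrimitiveRoot_tC hr0
  have hD := qNumer_tC_one_ne_zero hr
  have hq := qint_mul_qNumer_tC_one hr
  set t := tC r
  set G := quadGaussSum t (2 * r)
  refine ⟨G * t / qNumer t 1,
    div_ne_zero (mul_ne_zero (quadGaussSum_ne_zero ht hr0) (ht.ne_zero (by omega))) hD,
    fun j _ ↦ mul_left_cancel₀ (pow_ne_zero 2 hD) ?_⟩
  calc qNumer t 1 ^ 2 * ∑ k ∈ Icc 1 (r - 1), (qint r (j * k) : ℂ) * qint r k * t ^ (-(k : ℤ) ^ 2)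
      = ∑ k ∈ Icc 1 (r - 1), qNumer t (j * k) * qNumer t k * t ^ (-(k : ℤ) ^ 2) := by
        rw [mul_sum]
        refine sum_congr rfl fun k _ ↦ ?_
        rw [← Nat.cast_mul, ← hq, ← hq]
        ring
    _ = G * t * qNumer t j * t ^ ((j : ℤ) ^ 2) :=
        sum_Icc_qNumer_mul_qNumer_mul_zpow_neg_sq ht.pow_eq_one hr0 j
    _ = qNumer t 1 ^ 2 * (G * t / qNumer t 1 * qint r j * t ^ ((j : ℤ) ^ 2)) := by
        rw [← hq j]
        field_simp
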